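/- arXiv:2605.13488 — 3 statements merged into one kernel-verified Lean document; each statement's English description precedes it below -/
import Mathlib

section
/- In any connected graph, every two longest paths share a common vertex. -/
/-!
Suppose two longest paths `p` and `q` (with `|p| ≤ |q|`) were vertex-disjoint. A shortest path
`r` from `p` to `q` meets `p` only at its start `u` and `q` only at its end `v`, and has length at
least one. Following the longer part of `p` into `u`, then `r`, then the longer part of `q` out of
`v` gives a path of length at least `|p|/2 + 1 + |q|/2 > |p|`, contradicting the maximality of `p`.
-/

/-- The set of lengths (numbers of edges) of simple paths in `G`. -/
def pathLengths {V : Type*} (G : SimpleGraph V) : Set ℕ :=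
  {n | ∃ (a b : V) (p : G.Walk a b), p.IsPath ∧ p.length = n}

/-- `p` is a longest path of `G`: a path whose length is maximal among all paths of `G`. -/
def IsLongestPath {V : Type*} (G : SimpleGraph V) {a b : V} (p : G.Walk a b) : Prop :=
  p.IsPath ∧ ∀ n ∈ pathLengths G, n ≤ p.length

/-- `v` is a Gallai vertex of `G`: it lies on every longest path. -/
def GallaiVertex {V : Type*} (G : SimpleGraph V) (v : V) : Prop :=
  ∀ (a b : V) (p : G.Walk a b), IsLongestPath G p → v ∈ p.support

/-- Relation generating the graph obtained from `H` by attaching a pendant path of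
length `k` at the vertex `x` (the pendant vertices are `Sum.inr 0, …, Sum.inr (k-1)`). -/
def pendantRel {V : Type*} (H : SimpleGraph V) (x : V) (k : ℕ) :
    V ⊕ Fin k → V ⊕ Fin k → Prop
  | Sum.inl a, Sum.inl b => H.Adj a b
  | Sum.inl a, Sum.inr i => a = x ∧ i.val = 0
  | Sum.inr i, Sum.inr j => i.val + 1 = j.val
  | _, _ => False

/-- The graph obtained from `H` by attaching a pendant path of length `k` at `x`. -/
def pendantGraph {V : Type*} (H : SimpleGraph V) (x : V) (k : ℕ) :
    SimpleGraph (V ⊕ Fin k) :=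
  SimpleGraph.fromRel (pendantRel H x k)

namespace SimpleGraph

variable {V : Type*} {G : SimpleGraph V}

namespace Walk

theorem IsPath.append {u v w : V} {p : G.Walk u v} {q : G.Walk v w} (hp : p.IsPath)
    (hq : q.IsPath) (hpq : ∀ x ∈ p.support, x ∈ q.support → x = v) : (p.append q).IsPath := by
  rw [isPath_def, support_append]
  refine hp.support_nodup.append hq.support_nodup.tail fun x hxp hxq => ?_
  have hv : v ∉ q.support.tail := by
    have := hq.support_nodup
    rw [← cons_tail_support] at this
    exact (List.nodup_cons.mp this).1
  exact hv (hpq x hxp (List.mem_of_mem_tail hxq) ▸ hxq)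

variable [DecidableEq V]

theorem IsPath.exists_long_subpath_to {a b u : V} {p : G.Walk a b} (hp : p.IsPath)
    (hu : u ∈ p.support) :
    ∃ (x : V) (s : G.Walk x u), s.IsPath ∧ s.support ⊆ p.support ∧ p.length ≤ 2 * s.length := by
  have hsplit : (p.takeUntil u hu).length + (p.dropUntil u hu).length = p.length := by
    rw [← length_append, take_spec]
  rcases le_total (p.takeUntil u hu).length (p.dropUntil u hu).length with hle | hle
  · refine ⟨b, (p.dropUntil u hu).reverse, (hp.dropUntil hu).reverse, ?_, by
      rw [length_reverse]; omega⟩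
    intro z hz
    rw [support_reverse, List.mem_reverse] at hz
    exact p.support_dropUntil_subset_support hu hz
  · exact ⟨a, p.takeUntil u hu, hp.takeUntil hu, p.support_takeUntil_subset_support hu, by omega⟩

theorem IsPath.exists_long_subpath_from {a b u : V} {p : G.Walk a b} (hp : p.IsPath)
    (hu : u ∈ p.support) :
    ∃ (y : V) (t : G.Walk u y), t.IsPath ∧ t.support ⊆ p.support ∧ p.length ≤ 2 * t.length := by
  obtain ⟨y, s, hs, hsp, hlen⟩ :=
    hp.reverse.exists_long_subpath_to (by rwa [support_reverse, List.mem_reverse])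
  refine ⟨y, s.reverse, hs.reverse, fun z hz => ?_, by rwa [length_reverse, ← p.length_reverse]⟩
  rw [support_reverse, List.mem_reverse] at hz
  simpa only [support_reverse, List.mem_reverse] using hsp hz

theorem eq_of_mem_support_of_forall_length_le {S T : Set V} {u v w : V} (r : G.Walk u v)
    (hv : v ∈ T) (hmin : ∀ u' ∈ S, ∀ v' ∈ T, ∀ r' : G.Walk u' v', r.length ≤ r'.length)
    (hw : w ∈ r.support) (hwS : w ∈ S) : w = u := by
  have hdrop := hmin w hwS v hv (r.dropUntil w hw)
  have hsplit : (r.takeUntil w hw).length + (r.dropUntil w hw).length = r.length := by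
    rw [← length_append, take_spec]
  exact (eq_of_length_eq_zero (by omega : (r.takeUntil w hw).length = 0)).symm

end Walk

open Walk in
theorem Connected.exists_isPath_meeting_only_at_ends (hG : G.Connected) {S T : Set V}
    (hS : S.Nonempty) (hT : T.Nonempty) :
    ∃ u ∈ S, ∃ v ∈ T, ∃ r : G.Walk u v, r.IsPath ∧
      (∀ w ∈ r.support, w ∈ S → w = u) ∧ (∀ w ∈ r.support, w ∈ T → w = v) := by
  classical
  have hex : ∃ n, ∃ u ∈ S, ∃ v ∈ T, ∃ r : G.Walk u v, r.length = n := by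
    obtain ⟨a, ha⟩ := hS
    obtain ⟨c, hc⟩ := hT
    exact ⟨_, a, ha, c, hc, (hG a c).some, rfl⟩
  obtain ⟨u, hu, v, hv, r₀, hr₀⟩ := Nat.find_spec hex
  have hmin : ∀ u' ∈ S, ∀ v' ∈ T, ∀ r' : G.Walk u' v', r₀.bypass.length ≤ r'.length :=
    fun u' hu' v' hv' r' =>
      r₀.length_bypass_le_length.trans (hr₀ ▸ Nat.find_min' hex ⟨u', hu', v', hv', r', rfl⟩)
  have hmin_rev : ∀ v' ∈ T, ∀ u' ∈ S, ∀ r' : G.Walk v' u', r₀.bypass.reverse.length ≤ r'.length :=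
    fun v' hv' u' hu' r' => by
      simpa only [length_reverse] using hmin u' hu' v' hv' r'.reverse
  refine ⟨u, hu, v, hv, r₀.bypass, r₀.bypass_isPath,
    fun w hw hwS => r₀.bypass.eq_of_mem_support_of_forall_length_le hv hmin hw hwS,
    fun w hw hwT => ?_⟩
  exact r₀.bypass.reverse.eq_of_mem_support_of_forall_length_le hu hmin_rev
    (by rwa [support_reverse, List.mem_reverse]) hwT

end SimpleGraph

open SimpleGraph Walk in
theorem stmt_0_general {V : Type} (G : SimpleGraph V) (hG : G.Connected)
    {a b c d : V} (p : G.Walk a b) (q : G.Walk c d)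
    (hp : IsLongestPath G p) (hq : IsLongestPath G q) :
    ∃ x, x ∈ p.support ∧ x ∈ q.support := by
  classical
  by_contra! hdisj
  obtain ⟨u, hu, v, hv, r, hr, hru, hrv⟩ :=
    hG.exists_isPath_meeting_only_at_ends (S := {w | w ∈ p.support}) (T := {w | w ∈ q.support})
      ⟨a, p.start_mem_support⟩ ⟨c, q.start_mem_support⟩
  have hr_pos : 0 < r.length :=
    Nat.pos_of_ne_zero fun h => hdisj u hu (eq_of_length_eq_zero h ▸ hv)
  obtain ⟨x, s, hs, hsp, hs_len⟩ := hp.1.exists_long_subpath_to hu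
  obtain ⟨y, t, ht, htq, ht_len⟩ := hq.1.exists_long_subpath_from hv
  have hsr : (s.append r).IsPath := hs.append hr fun w hws hwr => hru w hwr (hsp hws)
  have hsrt : ((s.append r).append t).IsPath := hsr.append ht fun w hw hwt => by
    rcases (mem_support_append_iff _ _).1 hw with hws | hwr
    · exact absurd (htq hwt) (hdisj w (hsp hws))
    · exact hrv w hwr (htq hwt)
  have hp_max := hp.2 _ ⟨x, y, _, hsrt, rfl⟩
  have hpq := hq.2 _ ⟨a, b, p, hp.1, rfl⟩
  simp only [length_append] at hp_max
  omega

/-- In any connected graph, every two longest paths share a common vertex. -/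
theorem stmt_0 {V : Type} [Fintype V] (G : SimpleGraph V) (hG : G.Connected)
    {a b c d : V} (p : G.Walk a b) (q : G.Walk c d)
    (hp : IsLongestPath G p) (hq : IsLongestPath G q) :
    ∃ x, x ∈ p.support ∧ x ∈ q.support :=
  stmt_0_general G hG p q hp hq
end

section
/- Let H be a graph obtained from a graph H₀ with distinguished vertices x₁, x₂ by: attaching a pendant path of length m at x₁ with other endpoint v, attaching a pendant path of length m at x₂ with other endpoint w, and adding an internally disjoint path of length m − 2 between x₁ and x₂, where m = |V(H₀)| ≥ 3. If H₀ has a Hamiltonian path from x₁ to x₂, then λ(H) = 3m − 1 and every path of length 3m − 1 in H has endpoints v and w. -/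
/-- Relation generating the gadget graph `H` from `H₀`: a pendant path of length `m` at
`x₁` (vertices `Sum.inr (Sum.inl i)`, tip `v` at `i = m - 1`), a pendant path of length
`m` at `x₂` (vertices `Sum.inr (Sum.inr (Sum.inl i))`, tip `w` at `i = m - 1`), and an
internally disjoint path of length `m - 2` between `x₁` and `x₂` with `m - 3` new
internal vertices `Sum.inr (Sum.inr (Sum.inr i))` (a direct edge `x₁x₂` when `m = 3`). -/
def gadgetRel {V : Type*} (H0 : SimpleGraph V) (x1 x2 : V) (m : ℕ) :
    V ⊕ (Fin m ⊕ Fin m ⊕ Fin (m - 3)) → V ⊕ (Fin m ⊕ Fin m ⊕ Fin (m - 3)) → Prop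
  | Sum.inl a, Sum.inl b => H0.Adj a b ∨ (m = 3 ∧ a = x1 ∧ b = x2)
  | Sum.inl a, Sum.inr (Sum.inl i) => a = x1 ∧ i.val = 0
  | Sum.inl a, Sum.inr (Sum.inr (Sum.inl i)) => a = x2 ∧ i.val = 0
  | Sum.inl a, Sum.inr (Sum.inr (Sum.inr i)) =>
      (a = x1 ∧ i.val = 0) ∨ (a = x2 ∧ i.val = m - 4)
  | Sum.inr (Sum.inl i), Sum.inr (Sum.inl j) => i.val + 1 = j.val
  | Sum.inr (Sum.inr (Sum.inl i)), Sum.inr (Sum.inr (Sum.inl j)) => i.val + 1 = j.val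
  | Sum.inr (Sum.inr (Sum.inr i)), Sum.inr (Sum.inr (Sum.inr j)) => i.val + 1 = j.val
  | _, _ => False

/-- The gadget graph `H` built from `H₀`, `x₁`, `x₂` and `m`. -/
def gadgetGraph {V : Type*} (H0 : SimpleGraph V) (x1 x2 : V) (m : ℕ) :
    SimpleGraph (V ⊕ (Fin m ⊕ Fin m ⊕ Fin (m - 3))) :=
  SimpleGraph.fromRel (gadgetRel H0 x1 x2 m)

/-! Deleting the cut vertices `x₁, x₂` splits `H` into `H₀ - {x₁, x₂}` (`m - 2` vertices), the
two pendant legs (`m` vertices each) and the interior of the bridge (`m - 3` vertices), and a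
stretch of a path avoiding `x₁, x₂` stays inside one of these parts. So a path is made of at
most three such stretches; if it passes through both `x₁` and `x₂`, the middle stretch runs from
one to the other and hence lies in `H₀ - {x₁, x₂}` or in the bridge. This bounds the number of
vertices by `m + (m - 2) + m + 2 = 3m`, with equality only if both outer stretches are whole legs.
Then both tips `v, w` lie on the path, and having a single neighbour each they are its endpoints.
The Hamiltonian `x₁x₂`-path of `H₀` extended by both legs has `3m` vertices. -/

open SimpleGraph

theorem SimpleGraph.Walk.IsPath.eq_or_eq_of_neighborSet_subsingleton {V : Type*}
    {G : SimpleGraph V} {a b u : V} {p : G.Walk a b} (hp : p.IsPath) (hu : u ∈ p.support)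
    (hsub : (G.neighborSet u).Subsingleton) : u = a ∨ u = b := by
  classical
  by_contra! hne
  have hq : ¬ (p.takeUntil u hu).Nil := Walk.not_nil_of_ne hne.1.symm
  have hr : ¬ (p.dropUntil u hu).Nil := Walk.not_nil_of_ne hne.2
  have heq : (p.takeUntil u hu).penultimate = (p.dropUntil u hu).snd :=
    hsub (Walk.adj_penultimate hq).symm (Walk.adj_snd hr)
  have hnd := hp.support_nodup
  rw [← p.take_spec hu, Walk.support_append, List.nodup_append] at hnd
  exact hnd.2.2 _ (Walk.getVert_mem_support _ _) _ (heq ▸ Walk.snd_mem_tail_support hr) rfl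

theorem SimpleGraph.mem_pathLengths_of_isChain {V : Type*} {G : SimpleGraph V} {l : List V}
    (hne : l ≠ []) (hch : l.IsChain G.Adj) (hnd : l.Nodup) : l.length - 1 ∈ pathLengths G :=
  ⟨_, _, Walk.ofSupport l hne hch, Walk.IsPath.mk' (by simpa using hnd), by simp⟩

theorem List.exists_eq_append_cons_append_cons {α : Type*} {s : List α} {a b : α}
    (ha : a ∈ s) (hb : b ∈ s) (hab : a ≠ b) :
    ∃ A B C, s = A ++ a :: (B ++ b :: C) ∨ s = A ++ b :: (B ++ a :: C) := by
  obtain ⟨l₁, l₂, rfl⟩ := List.append_of_mem ha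
  rcases List.mem_append.1 hb with hb | hb
  · obtain ⟨A, B, rfl⟩ := List.append_of_mem hb
    exact ⟨A, B, l₂, Or.inr (by simp)⟩
  · obtain ⟨B, C, rfl⟩ := List.append_of_mem ((List.mem_cons.1 hb).resolve_left hab.symm)
    exact ⟨l₁, B, C, Or.inl rfl⟩

theorem List.Nodup.length_le_card_of_forall_mem {α : Type*} [DecidableEq α] {s : List α}
    {t : Finset α} (hnd : s.Nodup) (hs : ∀ u ∈ s, u ∈ t) : s.length ≤ t.card := by
  rw [← List.toFinset_card_of_nodup hnd]
  exact Finset.card_le_card fun u hu => hs u (List.mem_toFinset.1 hu)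

theorem Set.pair_eq_pair_of_eq_or_eq {α : Type*} {a b c d : α} (hc : c = a ∨ c = b)
    (hd : d = a ∨ d = b) (hcd : c ≠ d) : ({a, b} : Set α) = {c, d} := by
  rcases hc with rfl | rfl <;> rcases hd with rfl | rfl
  · exact absurd rfl hcd
  · rfl
  · exact Set.pair_comm _ _
  · exact absurd rfl hcd

open Sum Finset

abbrev GadgetVertex (V : Type*) (m : ℕ) := V ⊕ (Fin m ⊕ Fin m ⊕ Fin (m - 3))

/-- The parts left after deleting the cut vertices `x₁, x₂`: no edge of the gadget graph that
avoids `x₁, x₂` joins two different parts. -/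
inductive Piece
  | core
  | leg₁
  | leg₂
  | bridge

section Gadget

variable {V : Type*} {H0 : SimpleGraph V} {x1 x2 : V} {m : ℕ}

def piece : GadgetVertex V m → Piece
  | inl _ => .core
  | inr (inl _) => .leg₁
  | inr (inr (inl _)) => .leg₂
  | inr (inr (inr _)) => .bridge

theorem piece_eq_of_adj {y z : GadgetVertex V m} (h : (gadgetGraph H0 x1 x2 m).Adj y z)
    (hy : y ≠ inl x1 ∧ y ≠ inl x2) (hz : z ≠ inl x1 ∧ z ≠ inl x2) : piece y = piece z := by
  simp only [gadgetGraph, fromRel_adj] at h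
  obtain ⟨-, h | h⟩ := h <;>
    rcases y with u | i | i | i <;> rcases z with u' | j | j | j <;>
      simp_all [gadgetRel, piece]

theorem eq_of_adj_inl_leg₁ {x : V} {i : Fin m}
    (h : (gadgetGraph H0 x1 x2 m).Adj (inl x) (inr (inl i))) : x = x1 := by
  simp only [gadgetGraph, fromRel_adj] at h
  obtain ⟨-, h | h⟩ := h <;> simp_all [gadgetRel]

theorem eq_of_adj_inl_leg₂ {x : V} {i : Fin m}
    (h : (gadgetGraph H0 x1 x2 m).Adj (inl x) (inr (inr (inl i)))) : x = x2 := by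
  simp only [gadgetGraph, fromRel_adj] at h
  obtain ⟨-, h | h⟩ := h <;> simp_all [gadgetRel]

theorem neighborSet_tip₁_subsingleton (hm : 0 < m) :
    ((gadgetGraph H0 x1 x2 m).neighborSet (inr (inl ⟨m - 1, by omega⟩))).Subsingleton := by
  intro y hy z hz
  simp only [mem_neighborSet, gadgetGraph, fromRel_adj] at hy hz
  rcases y with u | ⟨i, hi⟩ | ⟨i, hi⟩ | i <;> rcases z with u' | ⟨j, hj⟩ | ⟨j, hj⟩ | j <;>
    simp [gadgetRel] at hy hz ⊢ <;> grind

theorem neighborSet_tip₂_subsingleton (hm : 0 < m) :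
    ((gadgetGraph H0 x1 x2 m).neighborSet (inr (inr (inl ⟨m - 1, by omega⟩)))).Subsingleton := by
  intro y hy z hz
  simp only [mem_neighborSet, gadgetGraph, fromRel_adj] at hy hz
  rcases y with u | ⟨i, hi⟩ | ⟨i, hi⟩ | i <;> rcases z with u' | ⟨j, hj⟩ | ⟨j, hj⟩ | j <;>
    simp [gadgetRel] at hy hz ⊢ <;> grind

theorem isChain_leg₁ :
    ((List.finRange m).map fun i => (inr (inl i) : GadgetVertex V m)).IsChain
      (gadgetGraph H0 x1 x2 m).Adj := by
  rw [List.isChain_iff_getElem]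
  intro i hi
  simp [gadgetGraph, gadgetRel]

theorem isChain_leg₂ :
    ((List.finRange m).map fun i => (inr (inr (inl i)) : GadgetVertex V m)).IsChain
      (gadgetGraph H0 x1 x2 m).Adj := by
  rw [List.isChain_iff_getElem]
  intro i hi
  simp [gadgetGraph, gadgetRel]

theorem adj_inl_leg₁_zero {n : ℕ} :
    (gadgetGraph H0 x1 x2 (n + 1)).Adj (inl x1) (inr (inl 0)) := by
  simp [gadgetGraph, gadgetRel]

theorem adj_inl_leg₂_zero {n : ℕ} :
    (gadgetGraph H0 x1 x2 (n + 1)).Adj (inl x2) (inr (inr (inl 0))) := by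
  simp [gadgetGraph, gadgetRel]

variable (H0 x1 x2 m) in
@[simps]
def inlHom : H0 →g gadgetGraph H0 x1 x2 m where
  toFun := inl
  map_rel' h := by simpa [gadgetGraph, gadgetRel, h.ne] using Or.inl (Or.inl h)

theorem exists_long_chain (hm : 0 < m) {p : H0.Walk x1 x2} (hp : p.IsPath) :
    ∃ l : List (GadgetVertex V m), l ≠ [] ∧ l.IsChain (gadgetGraph H0 x1 x2 m).Adj ∧ l.Nodup ∧
      l.length = 2 * m + p.support.length := by
  obtain ⟨n, rfl⟩ : ∃ n, m = n + 1 := ⟨m - 1, by omega⟩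
  set q := p.map (inlHom H0 x1 x2 (n + 1))
  refine ⟨((List.finRange (n + 1)).map fun i => inr (inl i)).reverse ++ q.support ++
    (List.finRange (n + 1)).map fun i => inr (inr (inl i)), by simp, ?_, ?_, by simp [q]; ring⟩
  · refine List.isChain_append.2 ⟨List.isChain_append.2 ⟨?_, q.isChain_adj_support, ?_⟩,
      isChain_leg₂, ?_⟩
    · exact List.isChain_reverse.2 (isChain_leg₁.imp fun _ _ h => h.symm)
    · rw [List.getLast?_reverse, List.head?_eq_some_head q.support_ne_nil, q.head_support]
      simpa [List.finRange_succ] using (adj_inl_leg₁_zero (H0 := H0) (x2 := x2) (n := n)).symm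
    · rw [List.getLast?_append_of_ne_nil _ q.support_ne_nil,
        List.getLast?_eq_some_getLast q.support_ne_nil, q.getLast_support]
      simpa [List.finRange_succ] using (adj_inl_leg₂_zero (H0 := H0) (x1 := x1) (n := n))
  · simp only [List.nodup_append, List.nodup_reverse, q, Walk.support_map]
    refine ⟨⟨(List.nodup_finRange _).map ?_, hp.support_nodup.map inl_injective, ?_⟩,
      (List.nodup_finRange _).map ?_, ?_⟩
    · exact fun i j h => by simpa using h
    · simp
    · exact fun i j h => by simpa using h
    · simp

variable [Fintype V] [DecidableEq V]

variable (x1 x2 m) in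
def Piece.verts : Piece → Finset (GadgetVertex V m)
  | .core => ((univ.erase x1).erase x2).map .inl
  | .leg₁ => univ.map (.trans .inl .inr)
  | .leg₂ => univ.map (.trans (.trans .inl .inr) .inr)
  | .bridge => univ.map (.trans (.trans .inr .inr) .inr)

theorem mem_verts_piece {y : GadgetVertex V m} (hy : y ≠ inl x1 ∧ y ≠ inl x2) :
    y ∈ (piece y).verts x1 x2 m := by
  rcases y with u | i | i | i <;> simp_all [piece, Piece.verts]

theorem card_verts_core (hx : x1 ≠ x2) :
    (Piece.core.verts x1 x2 m).card = Fintype.card V - 2 := by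
  rw [Piece.verts, card_map, card_erase_of_mem (by simp [hx.symm]), card_erase_of_mem (mem_univ _),
    card_univ]
  rfl

theorem card_verts_le (hx : x1 ≠ x2) (hcard : m = Fintype.card V) (k : Piece) :
    (k.verts x1 x2 m).card ≤ m := by
  cases k with
  | core => rw [card_verts_core hx]; omega
  | _ => simp [Piece.verts]

theorem card_verts_le_of_ne_leg (hx : x1 ≠ x2) (hcard : m = Fintype.card V) {k : Piece}
    (h₁ : k ≠ .leg₁) (h₂ : k ≠ .leg₂) : (k.verts x1 x2 m).card ≤ m - 2 := by
  cases k with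
  | core => rw [card_verts_core hx]; omega
  | leg₁ => exact absurd rfl h₁
  | leg₂ => exact absurd rfl h₂
  | bridge => simp [Piece.verts]; omega

theorem exists_piece_of_isChain {s : List (GadgetVertex V m)}
    (hch : s.IsChain (gadgetGraph H0 x1 x2 m).Adj) (hoff : ∀ u ∈ s, u ≠ inl x1 ∧ u ≠ inl x2) :
    ∃ k : Piece, ∀ u ∈ s, u ∈ k.verts x1 x2 m := by
  rcases s with _ | ⟨y, t⟩
  · exact ⟨.core, by simp⟩
  have hpiece : (y :: t).IsChain fun u v => piece u = piece v :=
    hch.imp_of_mem_imp fun u v hu hv huv => piece_eq_of_adj huv (hoff u hu) (hoff v hv)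
  refine ⟨piece y, fun u hu => ?_⟩
  rw [← hpiece.induction (fun u => piece u = piece y) _ (fun _ _ h h' => h.symm.trans h')
    (fun _ => rfl) u hu]
  exact mem_verts_piece (hoff u hu)

theorem length_le_of_forall_ne_cut (hx : x1 ≠ x2) (hcard : m = Fintype.card V)
    {s : List (GadgetVertex V m)} (hch : s.IsChain (gadgetGraph H0 x1 x2 m).Adj)
    (hnd : s.Nodup) (hoff : ∀ u ∈ s, u ≠ inl x1 ∧ u ≠ inl x2) : s.length ≤ m := by
  obtain ⟨k, hk⟩ := exists_piece_of_isChain hch hoff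
  exact (hnd.length_le_card_of_forall_mem hk).trans (card_verts_le hx hcard k)

theorem tip_mem_of_length_eq (hx : x1 ≠ x2) (hcard : m = Fintype.card V) (hm : 0 < m)
    {s : List (GadgetVertex V m)} (hch : s.IsChain (gadgetGraph H0 x1 x2 m).Adj)
    (hnd : s.Nodup) (hoff : ∀ u ∈ s, u ≠ inl x1 ∧ u ≠ inl x2) (hlen : s.length = m) :
    inr (inl ⟨m - 1, by omega⟩) ∈ s ∨ inr (inr (inl ⟨m - 1, by omega⟩)) ∈ s := by
  obtain ⟨k, hk⟩ := exists_piece_of_isChain hch hoff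
  have hle := hnd.length_le_card_of_forall_mem hk
  have hverts : s.toFinset = k.verts x1 x2 m :=
    eq_of_subset_of_card_le (fun u hu => hk u (List.mem_toFinset.1 hu))
      (by rw [List.toFinset_card_of_nodup hnd, hlen]; exact card_verts_le hx hcard k)
  by_cases h₁ : k = .leg₁
  · left
    rw [← List.mem_toFinset, hverts, h₁]
    simp [Piece.verts]
  by_cases h₂ : k = .leg₂
  · right
    rw [← List.mem_toFinset, hverts, h₂]
    simp [Piece.verts]
  have := card_verts_le_of_ne_leg hx hcard h₁ h₂
  omega

theorem length_le_sub_two_of_adj_cuts (hx : x1 ≠ x2) (hcard : m = Fintype.card V)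
    {s : List (GadgetVertex V m)} (hch : s.IsChain (gadgetGraph H0 x1 x2 m).Adj)
    (hnd : s.Nodup) (hoff : ∀ u ∈ s, u ≠ inl x1 ∧ u ≠ inl x2)
    (h₁ : ∃ u ∈ s, (gadgetGraph H0 x1 x2 m).Adj (inl x1) u)
    (h₂ : ∃ u ∈ s, (gadgetGraph H0 x1 x2 m).Adj (inl x2) u) : s.length ≤ m - 2 := by
  obtain ⟨k, hk⟩ := exists_piece_of_isChain hch hoff
  refine (hnd.length_le_card_of_forall_mem hk).trans (card_verts_le_of_ne_leg hx hcard ?_ ?_)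
  · rintro rfl
    obtain ⟨u, hu, hadj⟩ := h₂
    have hu' := hk u hu
    simp only [Piece.verts, mem_map, mem_univ, true_and] at hu'
    obtain ⟨i, rfl⟩ := hu'
    exact hx (eq_of_adj_inl_leg₁ hadj).symm
  · rintro rfl
    obtain ⟨u, hu, hadj⟩ := h₁
    have hu' := hk u hu
    simp only [Piece.verts, mem_map, mem_univ, true_and] at hu'
    obtain ⟨i, rfl⟩ := hu'
    exact hx (eq_of_adj_inl_leg₂ hadj)

theorem length_le_and_tips_mem_of_split (hx : x1 ≠ x2) (hcard : m = Fintype.card V)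
    (hm : 3 ≤ m) {A B C : List (GadgetVertex V m)} {y z : GadgetVertex V m}
    (hy : y = inl x1 ∨ y = inl x2) (hz : z = inl x1 ∨ z = inl x2) (hyz : y ≠ z)
    (hch : (A ++ y :: (B ++ z :: C)).IsChain (gadgetGraph H0 x1 x2 m).Adj)
    (hnd : (A ++ y :: (B ++ z :: C)).Nodup) :
    (A ++ y :: (B ++ z :: C)).length ≤ 3 * m ∧
      ((A ++ y :: (B ++ z :: C)).length = 3 * m →
        inr (inl ⟨m - 1, by omega⟩) ∈ A ++ y :: (B ++ z :: C) ∧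
        inr (inr (inl ⟨m - 1, by omega⟩)) ∈ A ++ y :: (B ++ z :: C)) := by
  simp only [List.isChain_append, List.isChain_cons, List.head?_append, List.head?_cons] at hch
  obtain ⟨hchA, ⟨hyB, hchB, ⟨-, hchC⟩, hBz⟩, -⟩ := hch
  simp only [List.nodup_append, List.nodup_cons, List.mem_append, List.mem_cons] at hnd
  obtain ⟨hndA, ⟨hyBC, hndB, ⟨hzC, hndC⟩, hBzC⟩, hAyBzC⟩ := hnd
  have hcut : ∀ u, u = inl x1 ∨ u = inl x2 → u = y ∨ u = z := by
    rintro u (rfl | rfl) <;> rcases hy with rfl | rfl <;> rcases hz with rfl | rfl <;> simp_all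
  have hoffA : ∀ u ∈ A, u ≠ inl x1 ∧ u ≠ inl x2 := fun u hu => by
    have := hAyBzC u hu; grind
  have hoffB : ∀ u ∈ B, u ≠ inl x1 ∧ u ≠ inl x2 := fun u hu => by
    have := hBzC u hu; grind
  have hoffC : ∀ u ∈ C, u ≠ inl x1 ∧ u ≠ inl x2 := fun u hu => by grind
  have hA := length_le_of_forall_ne_cut hx hcard hchA hndA hoffA
  have hC := length_le_of_forall_ne_cut hx hcard hchC hndC hoffC
  have hB : B.length ≤ m - 2 := by
    rcases B with _ | ⟨b, B'⟩
    · simp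
    obtain ⟨l, hl⟩ := Option.isSome_iff_exists.1 (List.getLast?_isSome.2 (List.cons_ne_nil b B'))
    have hadj : ∀ u, u = inl x1 ∨ u = inl x2 →
        ∃ v ∈ b :: B', (gadgetGraph H0 x1 x2 m).Adj u v := by
      intro u hu
      rcases hcut u hu with rfl | rfl
      · exact ⟨b, List.mem_cons_self, hyB b (by simp)⟩
      · exact ⟨l, List.mem_of_getLast? hl, (hBz l hl u rfl).symm⟩
    exact length_le_sub_two_of_adj_cuts hx hcard hchB hndB hoffB (hadj _ (.inl rfl))
      (hadj _ (.inr rfl))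
  simp only [List.length_append, List.length_cons]
  refine ⟨by omega, fun hlen => ?_⟩
  have htA := tip_mem_of_length_eq hx hcard (by omega) hchA hndA hoffA (by omega)
  have htC := tip_mem_of_length_eq hx hcard (by omega) hchC hndC hoffC (by omega)
  have hAC : ∀ u ∈ A, u ∉ C := fun u hu hu' => hAyBzC u hu u (by simp [hu']) rfl
  simp only [List.mem_append, List.mem_cons]
  rcases htA with h₁ | h₂ <;> rcases htC with h₁' | h₂'
  · exact absurd h₁' (hAC _ h₁)
  · exact ⟨.inl h₁, .inr (.inr (.inr (.inr h₂')))⟩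
  · exact ⟨.inr (.inr (.inr (.inr h₁'))), .inl h₂⟩
  · exact absurd h₂' (hAC _ h₂)

theorem length_le_of_forall_eq_or_ne_cut (hx : x1 ≠ x2) (hcard : m = Fintype.card V)
    {s : List (GadgetVertex V m)} (hch : s.IsChain (gadgetGraph H0 x1 x2 m).Adj)
    (hnd : s.Nodup) (c : GadgetVertex V m) (hc : ∀ u ∈ s, u = c ∨ u ≠ inl x1 ∧ u ≠ inl x2) :
    s.length ≤ 2 * m + 1 := by
  by_cases hcs : c ∈ s
  · obtain ⟨A, C, rfl⟩ := List.append_of_mem hcs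
    simp only [List.isChain_append, List.isChain_cons] at hch
    simp only [List.nodup_append, List.nodup_cons, List.mem_cons] at hnd
    have hA := length_le_of_forall_ne_cut hx hcard hch.1 hnd.1 fun u hu =>
      (hc u (by simp [hu])).resolve_left fun h => hnd.2.2 u hu c (.inl rfl) h
    have hC := length_le_of_forall_ne_cut hx hcard hch.2.1.2 hnd.2.1.2 fun u hu =>
      (hc u (by simp [hu])).resolve_left fun h => hnd.2.1.1 (h ▸ hu)
    simp only [List.length_append, List.length_cons]
    omega
  · have := length_le_of_forall_ne_cut hx hcard hch hnd fun u hu =>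
      (hc u hu).resolve_left fun h => hcs (h ▸ hu)
    omega

theorem length_le_and_tips_mem (hx : x1 ≠ x2) (hcard : m = Fintype.card V) (hm : 3 ≤ m)
    {s : List (GadgetVertex V m)} (hch : s.IsChain (gadgetGraph H0 x1 x2 m).Adj)
    (hnd : s.Nodup) :
    s.length ≤ 3 * m ∧ (s.length = 3 * m →
      inr (inl ⟨m - 1, by omega⟩) ∈ s ∧ inr (inr (inl ⟨m - 1, by omega⟩)) ∈ s) := by
  have hx' : (inl x1 : GadgetVertex V m) ≠ inl x2 := by simpa using hx
  by_cases h : inl x1 ∈ s ∧ inl x2 ∈ s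
  · obtain ⟨A, B, C, rfl | rfl⟩ := List.exists_eq_append_cons_append_cons h.1 h.2 hx'
    · exact length_le_and_tips_mem_of_split hx hcard hm (.inl rfl) (.inr rfl) hx' hch hnd
    · exact length_le_and_tips_mem_of_split hx hcard hm (.inr rfl) (.inl rfl) hx'.symm hch hnd
  · obtain ⟨c, hc⟩ : ∃ c, ∀ u ∈ s, u = c ∨ u ≠ inl x1 ∧ u ≠ inl x2 := by
      rw [not_and_or] at h
      rcases h with h | h
      · exact ⟨inl x2, fun u hu => by grind⟩
      · exact ⟨inl x1, fun u hu => by grind⟩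
    have := length_le_of_forall_eq_or_ne_cut hx hcard hch hnd c hc
    exact ⟨by omega, fun _ => by omega⟩

end Gadget

/-- If `H₀` (on `m = |V(H₀)| ≥ 3` vertices) has a Hamiltonian path from `x₁` to `x₂`,
then the gadget graph has longest path length `3m − 1`, and every path of length
`3m − 1` has endpoints `v` and `w` (the two pendant tips). -/
theorem stmt_11 {V : Type} [Fintype V] (H0 : SimpleGraph V) (x1 x2 : V)
    (hx : x1 ≠ x2) (m : ℕ) (hm : 3 ≤ m) (hcard : m = Fintype.card V)
    (hham : ∃ p : H0.Walk x1 x2, p.IsPath ∧ ∀ u : V, u ∈ p.support) :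
    IsGreatest (pathLengths (gadgetGraph H0 x1 x2 m)) (3 * m - 1) ∧
    ∀ (a b : V ⊕ (Fin m ⊕ Fin m ⊕ Fin (m - 3)))
      (p : (gadgetGraph H0 x1 x2 m).Walk a b), p.IsPath → p.length = 3 * m - 1 →
      ({a, b} : Set (V ⊕ (Fin m ⊕ Fin m ⊕ Fin (m - 3)))) =
        {Sum.inr (Sum.inl (⟨m - 1, by omega⟩ : Fin m)),
         Sum.inr (Sum.inr (Sum.inl (⟨m - 1, by omega⟩ : Fin m)))} := by
  classical
  obtain ⟨p, hp, hcov⟩ := hham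
  obtain ⟨l, hne, hch, hnd, hlen⟩ := exists_long_chain (m := m) (by omega) hp
  replace hlen : l.length = 3 * m := by
    rw [hlen, (hp.isHamiltonian_of_mem hcov).length_support, ← hcard]; ring
  have hbound := fun {a b} (q : (gadgetGraph H0 x1 x2 m).Walk a b) (hq : q.IsPath) =>
    length_le_and_tips_mem hx hcard hm q.isChain_adj_support hq.support_nodup
  refine ⟨⟨hlen ▸ mem_pathLengths_of_isChain hne hch hnd, ?_⟩, ?_⟩
  · rintro n ⟨a, b, q, hq, rfl⟩
    have := (hbound q hq).1
    rw [q.length_support] at this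
    omega
  · intro a b q hq hlen
    obtain ⟨h₁, h₂⟩ := (hbound q hq).2 (by rw [q.length_support]; omega)
    exact Set.pair_eq_pair_of_eq_or_eq
      (hq.eq_or_eq_of_neighborSet_subsingleton h₁ (neighborSet_tip₁_subsingleton (by omega)))
      (hq.eq_or_eq_of_neighborSet_subsingleton h₂ (neighborSet_tip₂_subsingleton (by omega)))
      (by simp)
end

section
/- Let H be a connected graph whose every longest path has endpoints v and w (v ≠ w), and let H' be H together with a pendant path of length d ≥ 1 attached at w with new endpoint w'. Then λ(H') = λ(H) + d and every longest path of H' has endpoints v and w'. -/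
/-!
The pendant meets `H` only through the bridge `w — inr 0`. So a path of the new graph either stays
in `H` (length at most `λ(H)`), stays on the pendant (length less than `d`), or is a path of `H`
ending at `w` followed by an initial segment of the pendant. In the last case its length is at most
`λ(H) + d`, with equality only if the `H`-part is a longest path of `H`, hence starts at `v`, and the
pendant part runs up to the tip. A longest `v`–`w` path of `H` followed by the whole pendant attains
the bound.
-/

namespace SimpleGraph.Walk

lemma IsPath.length_lt_card_of_support_subset {V : Type*} {G : SimpleGraph V} {u v : V}
    {p : G.Walk u v} (hp : p.IsPath) {s : Finset V} (hs : ∀ x ∈ p.support, x ∈ s) :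
    p.length < s.card := by
  classical
  rw [Nat.lt_iff_add_one_le, ← length_support, ← List.toFinset_card_of_nodup hp.support_nodup]
  exact Finset.card_le_card fun x hx => hs x (List.mem_toFinset.1 hx)

end SimpleGraph.Walk

section LongestPath

variable {V : Type*} {H : SimpleGraph V} {v w : V} {lH : ℕ}

lemma exists_isPath_length_eq_of_forall_isLongestPath (hlH : IsGreatest (pathLengths H) lH)
    (hend : ∀ (a b : V) (p : H.Walk a b), IsLongestPath H p → ({a, b} : Set V) = {v, w}) :
    ∃ p : H.Walk v w, p.IsPath ∧ p.length = lH := by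
  obtain ⟨a, b, p, hp, rfl⟩ := hlH.1
  rcases Set.pair_eq_pair_iff.1 (hend a b p ⟨hp, hlH.2⟩) with ⟨rfl, rfl⟩ | ⟨rfl, rfl⟩
  · exact ⟨p, hp, rfl⟩
  · exact ⟨p.reverse, hp.reverse, p.length_reverse⟩

lemma start_eq_of_isPath_of_length_eq (hlH : lH ∈ upperBounds (pathLengths H))
    (hend : ∀ (a b : V) (p : H.Walk a b), IsLongestPath H p → ({a, b} : Set V) = {v, w})
    {a : V} (p : H.Walk a w) (hp : p.IsPath) (hlen : p.length = lH) : a = v := by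
  rcases Set.pair_eq_pair_iff.1 (hend a w p ⟨hp, hlen ▸ hlH⟩) with ⟨rfl, -⟩ | ⟨rfl, rfl⟩ <;> rfl

end LongestPath

section PendantGraph

open SimpleGraph

variable {V : Type*} {H : SimpleGraph V} {w : V} {d : ℕ}

@[simp]
lemma pendantGraph_adj_inl_inl {a b : V} :
    (pendantGraph H w d).Adj (.inl a) (.inl b) ↔ H.Adj a b := by
  simp only [pendantGraph, fromRel_adj, pendantRel, ne_eq, Sum.inl.injEq]
  exact ⟨fun h => h.2.elim id fun h' => h'.symm, fun h => ⟨h.ne, .inl h⟩⟩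

@[simp]
lemma pendantGraph_adj_inl_inr {a : V} {i : Fin d} :
    (pendantGraph H w d).Adj (.inl a) (.inr i) ↔ a = w ∧ i.val = 0 := by
  simp [pendantGraph, pendantRel]

@[simp]
lemma pendantGraph_adj_inr_inl {a : V} {i : Fin d} :
    (pendantGraph H w d).Adj (.inr i) (.inl a) ↔ a = w ∧ i.val = 0 := by
  rw [adj_comm, pendantGraph_adj_inl_inr]

@[simp]
lemma pendantGraph_adj_inr_inr {i j : Fin d} :
    (pendantGraph H w d).Adj (.inr i) (.inr j) ↔ i.val + 1 = j.val ∨ j.val + 1 = i.val := by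
  simp only [pendantGraph, fromRel_adj, pendantRel, ne_eq, Sum.inr.injEq]
  exact ⟨fun h => h.2, fun h => ⟨by rintro rfl; omega, h⟩⟩

namespace pendantGraph

open Walk

/-- Distance from `H` in `pendantGraph H w d`. -/
def depth : V ⊕ Fin d → ℕ :=
  Sum.elim (fun _ => 0) (fun i => i.val + 1)

lemma depth_le (x : V ⊕ Fin d) : depth x ≤ d := by
  rcases x with a | i
  · exact Nat.zero_le d
  · exact i.isLt

lemma depth_eq_iff (hd : 0 < d) {x : V ⊕ Fin d} :
    depth x = d ↔ x = .inr ⟨d - 1, by omega⟩ := by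
  rcases x with a | i
  · simp [depth]; omega
  · simp [depth, Fin.ext_iff]; omega

/-- On the pendant, a vertex has a unique neighbour closer to `H`. -/
lemma depth_eq_succ_or_eq_of_adj {x₀ x u : V ⊕ Fin d}
    (h₀ : (pendantGraph H w d).Adj x₀ x) (h : (pendantGraph H w d).Adj x u)
    (hx : depth x = depth x₀ + 1) :
    depth u = depth x + 1 ∨ u = x₀ := by
  rcases x₀ with a | i <;> rcases x with b | j <;> rcases u with c | k <;>
    simp_all [depth, Fin.ext_iff]
  all_goals omega

/-- A path that has just stepped away from `H` keeps moving away from it. -/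
lemma depth_eq_add_length {x₀ x c : V ⊕ Fin d} (h₀ : (pendantGraph H w d).Adj x₀ x)
    (q : (pendantGraph H w d).Walk x c) (hq : (q.cons h₀).IsPath)
    (hx : depth x = depth x₀ + 1) :
    depth c = depth x + q.length := by
  induction q generalizing x₀ with
  | nil => rfl
  | @cons x u c h q ih =>
    rcases depth_eq_succ_or_eq_of_adj h₀ h hx with hu | rfl
    · rw [ih h hq.of_cons hu, hu, length_cons]
      ring
    · exact absurd (by simp) (cons_isPath_iff _ _ |>.1 hq).2

lemma inr_zero_mem_support (hd : 0 < d) {x y : V ⊕ Fin d} (q : (pendantGraph H w d).Walk x y)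
    (hx : x.isLeft) (hy : y.isRight) : .inr ⟨0, hd⟩ ∈ q.support := by
  induction q with
  | @nil u => cases u <;> simp_all
  | @cons x u y h q ih =>
    rcases u with b | i
    · exact List.mem_cons_of_mem _ (ih rfl hy)
    · obtain ⟨a, rfl⟩ := Sum.isLeft_iff.1 hx
      obtain rfl : i = ⟨0, hd⟩ := Fin.ext (pendantGraph_adj_inl_inr.1 h).2
      exact List.mem_cons_of_mem _ q.start_mem_support

/-- A path starting in `H` follows a path of `H`; if it leaves `H`, it does so at `w` and then
climbs the pendant. -/
lemma exists_isPath_length_eq_add_depth {a : V} {c : V ⊕ Fin d}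
    (q : (pendantGraph H w d).Walk (.inl a) c) (hq : q.IsPath) :
    ∃ (b : V) (p : H.Walk a b), p.IsPath ∧ (∀ x ∈ p.support, .inl x ∈ q.support) ∧
      q.length = p.length + depth c ∧ (c.isRight → b = w) := by
  generalize hx : (Sum.inl a : V ⊕ Fin d) = x at q hq
  induction q generalizing a with
  | nil =>
    subst hx
    exact ⟨a, nil, .nil, by simp, rfl, by simp⟩
  | @cons x u c h q ih =>
    subst hx
    rcases u with b | i
    · obtain ⟨b', p, hp, hsupp, hlen, hb'⟩ := ih rfl hq.of_cons
      have ha : a ∉ p.support := fun ha => (cons_isPath_iff _ _).1 hq |>.2 (hsupp a ha)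
      refine ⟨b', cons (pendantGraph_adj_inl_inl.1 h) p, hp.cons ha, ?_, ?_, hb'⟩
      · simpa using fun x hx => Or.inr (hsupp x hx)
      · simp only [length_cons, hlen]
        ring
    · obtain ⟨haw, hi⟩ := pendantGraph_adj_inl_inr.1 h
      have hc := depth_eq_add_length h q hq (by simp [depth, hi])
      refine ⟨a, nil, .nil, by simp, ?_, fun _ => haw⟩
      rw [length_cons, length_nil, hc]
      simp [depth, hi, add_comm]

/-- A path can only leave `H` through `inr 0`, and cannot come back; so a path between pendant
vertices stays on the pendant. -/
lemma isRight_of_mem_support_of_isPath {i j : Fin d}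
    (q : (pendantGraph H w d).Walk (.inr i) (.inr j)) (hq : q.IsPath) :
    ∀ z ∈ q.support, z.isRight := by
  intro z hz
  by_contra hzl
  rw [Sum.not_isRight] at hzl
  obtain ⟨q₁, q₂, -, -, rfl⟩ := hq.mem_support_iff_exists_append.1 hz
  have h₁ := inr_zero_mem_support i.pos q₁.reverse hzl rfl
  have h₂ := inr_zero_mem_support i.pos q₂ hzl rfl
  rw [support_reverse, List.mem_reverse] at h₁
  exact hq.ne_of_mem_support_of_append (by rintro rfl; simp at hzl) h₁ h₂ rfl

lemma length_lt_of_isPath_inr {i j : Fin d}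
    (q : (pendantGraph H w d).Walk (.inr i) (.inr j)) (hq : q.IsPath) : q.length < d := by
  have := hq.length_lt_card_of_support_subset (s := Finset.univ.map .inr) fun z hz => by
    obtain ⟨k, rfl⟩ := Sum.isRight_iff.1 (isRight_of_mem_support_of_isPath q hq z hz)
    simp
  simpa using this

lemma exists_isPath_pendant (hd : 0 < d) :
    ∃ r : (pendantGraph H w d).Walk (.inr ⟨0, hd⟩) (.inr ⟨d - 1, by omega⟩),
      r.IsPath ∧ r.length = d - 1 ∧ ∀ z ∈ r.support, z.isRight := by
  classical
  let f : pathGraph d →g pendantGraph H w d :=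
    ⟨Sum.inr, fun h => pendantGraph_adj_inr_inr.2 (pathGraph_adj.1 h)⟩
  obtain ⟨r⟩ := pathGraph_preconnected d ⟨0, hd⟩ ⟨d - 1, by omega⟩
  have hr : (r.bypass.map f).IsPath := r.bypass_isPath.map Sum.inr_injective
  have hright : ∀ z ∈ (r.bypass.map f).support, z.isRight := by simp [f]
  have hcross : (pendantGraph H w d).Adj (.inl w) (.inr ⟨0, hd⟩) := by simp
  have hlen := depth_eq_add_length hcross _
    (hr.cons fun h => by simpa using hright _ h) (by simp [depth])
  simp only [depth, f, RelHom.coeFn_mk, Sum.elim_inr, length_map] at hlen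
  refine ⟨_, hr, ?_, hright⟩
  rw [length_map]
  omega

variable {v : V} {lH : ℕ}

lemma length_le_of_isPath_inl (hd : 0 < d) (hlH : lH ∈ upperBounds (pathLengths H))
    (hend : ∀ (a b : V) (p : H.Walk a b), IsLongestPath H p → ({a, b} : Set V) = {v, w})
    {a : V} {c : V ⊕ Fin d} (q : (pendantGraph H w d).Walk (.inl a) c) (hq : q.IsPath) :
    q.length ≤ lH + d ∧ (q.length = lH + d → a = v ∧ c = .inr ⟨d - 1, by omega⟩) := by
  obtain ⟨b, p, hp, -, hlen, hb⟩ := exists_isPath_length_eq_add_depth q hq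
  have hp_le : p.length ≤ lH := hlH ⟨a, b, p, hp, rfl⟩
  have hc_le := depth_le c
  refine ⟨by omega, fun hq_eq => ?_⟩
  obtain rfl := (depth_eq_iff hd (x := c)).1 (by omega)
  obtain rfl := hb rfl
  exact ⟨start_eq_of_isPath_of_length_eq hlH hend p hp (by omega), rfl⟩

lemma length_le_of_isPath (hd : 0 < d) (hlH : lH ∈ upperBounds (pathLengths H))
    (hend : ∀ (a b : V) (p : H.Walk a b), IsLongestPath H p → ({a, b} : Set V) = {v, w})
    {x y : V ⊕ Fin d} (q : (pendantGraph H w d).Walk x y) (hq : q.IsPath) :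
    q.length ≤ lH + d ∧
      (q.length = lH + d → ({x, y} : Set (V ⊕ Fin d)) = {.inl v, .inr ⟨d - 1, by omega⟩}) := by
  rcases x with a | i
  · obtain ⟨hle, heq⟩ := length_le_of_isPath_inl hd hlH hend q hq
    exact ⟨hle, fun h => by obtain ⟨rfl, rfl⟩ := heq h; rfl⟩
  rcases y with b | j
  · obtain ⟨hle, heq⟩ := length_le_of_isPath_inl hd hlH hend q.reverse hq.reverse
    rw [length_reverse] at hle heq
    exact ⟨hle, fun h => by obtain ⟨rfl, hi⟩ := heq h; rw [hi]; exact Set.pair_comm _ _⟩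
  · have := length_lt_of_isPath_inr q hq
    exact ⟨by omega, by omega⟩

lemma exists_isPath_length_eq_add (hd : 0 < d) (hlH : IsGreatest (pathLengths H) lH)
    (hend : ∀ (a b : V) (p : H.Walk a b), IsLongestPath H p → ({a, b} : Set V) = {v, w}) :
    ∃ q : (pendantGraph H w d).Walk (.inl v) (.inr ⟨d - 1, by omega⟩),
      q.IsPath ∧ q.length = lH + d := by
  obtain ⟨p, hp, hp_len⟩ := exists_isPath_length_eq_of_forall_isLongestPath hlH hend
  obtain ⟨r, hr, hr_len, hright⟩ := exists_isPath_pendant (H := H) (w := w) hd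
  let f : H →g pendantGraph H w d := ⟨Sum.inl, pendantGraph_adj_inl_inl.2⟩
  have hcross : (pendantGraph H w d).Adj (.inl w) (.inr ⟨0, hd⟩) := by simp
  refine ⟨(p.map f).append (cons hcross r), ?_, ?_⟩
  · rw [isPath_def, support_append, support_cons, List.tail_cons, Walk.support_map,
      List.nodup_append]
    refine ⟨hp.support_nodup.map Sum.inl_injective, hr.support_nodup, ?_⟩
    rintro _ hx y hy rfl
    obtain ⟨x, -, rfl⟩ := List.mem_map.1 hx
    exact absurd (hright _ hy) (by simp [f])
  · simp only [length_append, length_map, length_cons, hp_len, hr_len]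
    omega

end pendantGraph

end PendantGraph

/-- If every longest path of a connected graph `H` has endpoint set `{v, w}` and `H'` is
obtained by attaching a pendant path of length `d ≥ 1` at `w` (new tip `w'`), then
`λ(H') = λ(H) + d` and every longest path of `H'` has endpoints `v` and `w'`. -/
theorem stmt_13 {V : Type} (H : SimpleGraph V)
    (v w : V) (lH : ℕ) (hlH : IsGreatest (pathLengths H) lH)
    (hend : ∀ (a b : V) (p : H.Walk a b), IsLongestPath H p → ({a, b} : Set V) = {v, w})
    (d : ℕ) (hd : 1 ≤ d) :
    IsGreatest (pathLengths (pendantGraph H w d)) (lH + d) ∧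
    ∀ (a b : V ⊕ Fin d) (p : (pendantGraph H w d).Walk a b),
      IsLongestPath (pendantGraph H w d) p →
      ({a, b} : Set (V ⊕ Fin d)) = {Sum.inl v, Sum.inr (⟨d - 1, by omega⟩ : Fin d)} := by
  obtain ⟨q, hq, hq_len⟩ := pendantGraph.exists_isPath_length_eq_add hd hlH hend
  have hmem : lH + d ∈ pathLengths (pendantGraph H w d) := ⟨_, _, q, hq, hq_len⟩
  refine ⟨⟨hmem, ?_⟩, fun a b p hp => ?_⟩
  · rintro n ⟨a, b, p, hp, rfl⟩
    exact (pendantGraph.length_le_of_isPath hd hlH.2 hend p hp).1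
  · obtain ⟨hle, heq⟩ := pendantGraph.length_le_of_isPath hd hlH.2 hend p hp.1
    exact heq (le_antisymm hle (hp.2 _ hmem))
end
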